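/- arXiv:2503.22108 — 4 statements merged into one kernel-verified Lean document; each statement's English description precedes it below -/
import Mathlib

section
/- Let p be a real number with 0 ≤ p ≤ 1, and define the 2×2 complex matrices E₀ = |0⟩⟨0| + √(1−p) |1⟩⟨1|, E₁ = √p |0⟩⟨1|, E = |0⟩⟨1|, and Z = |0⟩⟨0| − |1⟩⟨1|. Then for every 2×2 complex matrix ρ: E₀ ρ E₀† + E₁ ρ E₁† = ((1+√(1−p))/2)² ρ + p · E ρ E† + (p/4)(Z ρ + ρ Z) + ((1−√(1−p))/2)² Z ρ Z. -/
open Matrix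

/-- Exact decomposition of the amplitude-damping channel (Eq. (2) of the paper):
`E₀ ρ E₀† + E₁ ρ E₁† = ((1+√(1−p))/2)² ρ + p EρE† + (p/4)(Zρ + ρZ) + ((1−√(1−p))/2)² ZρZ`. -/
theorem amplitude_damping_decomposition (p : ℝ) (hp0 : 0 ≤ p) (hp1 : p ≤ 1)
    (ρ : Matrix (Fin 2) (Fin 2) ℂ) :
    letI E₀ : Matrix (Fin 2) (Fin 2) ℂ := !![1, 0; 0, (Real.sqrt (1 - p) : ℂ)]
    letI E₁ : Matrix (Fin 2) (Fin 2) ℂ := !![0, (Real.sqrt p : ℂ); 0, 0]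
    letI E : Matrix (Fin 2) (Fin 2) ℂ := !![0, 1; 0, 0]
    letI Z : Matrix (Fin 2) (Fin 2) ℂ := !![1, 0; 0, -1]
    E₀ * ρ * E₀ᴴ + E₁ * ρ * E₁ᴴ =
      ((((1 + Real.sqrt (1 - p)) / 2) ^ 2 : ℝ) : ℂ) • ρ
        + ((p : ℝ) : ℂ) • (E * ρ * Eᴴ)
        + ((p / 4 : ℝ) : ℂ) • (Z * ρ + ρ * Z)
        + ((((1 - Real.sqrt (1 - p)) / 2) ^ 2 : ℝ) : ℂ) • (Z * ρ * Z) := by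
  have hqr : Real.sqrt (1 - p) ^ 2 = 1 - p := Real.sq_sqrt (by linarith)
  have hpr : Real.sqrt p ^ 2 = p := Real.sq_sqrt hp0
  have hq : ((Real.sqrt (1 - p) : ℂ)) ^ 2 = 1 - (p : ℂ) := by
    rw [show ((Real.sqrt (1 - p) : ℂ)) ^ 2 = ((Real.sqrt (1 - p) ^ 2 : ℝ) : ℂ) by push_cast; ring,
      hqr]; push_cast; ring
  have hP : ((Real.sqrt p : ℂ)) ^ 2 = (p : ℂ) := by
    rw [show ((Real.sqrt p : ℂ)) ^ 2 = ((Real.sqrt p ^ 2 : ℝ) : ℂ) by push_cast; ring, hpr]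
  ext i j
  fin_cases i <;> fin_cases j <;>
    simp [Matrix.mul_apply, Matrix.vecMul, dotProduct, Fin.sum_univ_two,
      Matrix.conjTranspose_apply, Complex.conj_ofReal] <;>
    ring_nf <;> simp only [hq, hP] <;> ring
end

section
/- Let n ≥ 1 and let U be the operator on ℂ^{(config × config)} defined by (UΨ)(x, y) = (−1)^{Σ_{i,j} x(i,j)·y(j,i)} Ψ(x, y), i.e., the product over all lattice sites (i,j) of the physical CZ gate between site (i,j) of the first block and site (j,i) of the second block. Then for all a, b ∈ {0, 1}: U(ψ_a ⊗ ψ_b) = (−1)^{a·b} (ψ_a ⊗ ψ_b). In other words, this transversal arrangement of physical CZ gates implements the logical CZ gate on two Bacon-Shor code blocks. -/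
/-- A configuration of the `n × n` Bacon-Shor lattice: a bit at each site `(i, j)`
(`i` the row index, `j` the column index). -/
abbrev Config (n : ℕ) := Fin n × Fin n → Bool

/-- A configuration is row-constant if each row carries a constant bit string. -/
abbrev RowConst {n : ℕ} (x : Config n) : Prop :=
  ∀ i j j', x (i, j) = x (i, j')

/-- The number of rows of the configuration `x` consisting entirely of `1`s (for a
row-constant configuration, the number of rows carrying the bit `1`). -/
def rcount {n : ℕ} (x : Config n) : ℕ :=
  (Finset.univ.filter fun i : Fin n => ∀ j, x (i, j) = true).card

/-- The Bacon-Shor logical codeword `ψ_a` (`a ∈ {0,1}`):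
`ψ_a(x) = 2^{−(n+1)/2} (1 + (−1)^{a + r(x)})` for row-constant `x`, and `0` otherwise. -/
noncomputable def psi (n : ℕ) (a : Fin 2) (x : Config n) : ℂ :=
  if RowConst x then
    ((Real.sqrt 2 : ℂ))⁻¹ ^ (n + 1) * (1 + (-1 : ℂ) ^ ((a : ℕ) + rcount x))
  else 0

lemma card_cross {n : ℕ} (x y : Config n) (hx : RowConst x) (hy : RowConst y) :
    (Finset.univ.filter
        fun p : Fin n × Fin n => x p = true ∧ y (p.2, p.1) = true).card
      = rcount x * rcount y := by
  have hset : (Finset.univ.filter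
      fun p : Fin n × Fin n => x p = true ∧ y (p.2, p.1) = true)
      = (Finset.univ.filter fun i : Fin n => ∀ j, x (i, j) = true) ×ˢ
        (Finset.univ.filter fun i : Fin n => ∀ j, y (i, j) = true) := by
    ext ⟨i, j⟩
    simp only [Finset.mem_filter, Finset.mem_product, Finset.mem_univ, true_and]
    constructor
    · rintro ⟨h1, h2⟩
      exact ⟨fun j' => (hx i j' j).trans h1, fun i' => (hy j i' i).trans h2⟩
    · rintro ⟨h1, h2⟩
      exact ⟨h1 j, h2 i⟩
  rw [hset, Finset.card_product, rcount, rcount]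

/-- The transversal arrangement of physical CZ gates, connecting site `(i,j)` of the
first block to site `(j,i)` of the second block, implements the logical CZ gate:
pointwise on configurations `(x, y)`, multiplying by the phase
`(−1)^{Σ_{i,j} x(i,j)·y(j,i)}` sends `ψ_a ⊗ ψ_b` to `(−1)^{ab} ψ_a ⊗ ψ_b`. -/
theorem transversal_cz_is_logical_cz (n : ℕ) (hn : 1 ≤ n) (a b : Fin 2)
    (x y : Config n) :
    (-1 : ℂ) ^ ((Finset.univ.filter
        fun p : Fin n × Fin n => x p = true ∧ y (p.2, p.1) = true).card)
        * (psi n a x * psi n b y)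
      = (-1 : ℂ) ^ ((a : ℕ) * (b : ℕ)) * (psi n a x * psi n b y) := by
  by_cases hx : RowConst x
  · by_cases hy : RowConst y
    · by_cases ex : Even ((a : ℕ) + rcount x)
      · by_cases ey : Even ((b : ℕ) + rcount y)
        · rw [card_cross x y hx hy]
          congr 1
          have h1 : rcount x % 2 = (a : ℕ) % 2 := by
            have h := Nat.even_add.mp ex
            simp [Nat.even_iff] at h; omega
          have h2 : rcount y % 2 = (b : ℕ) % 2 := by
            have h := Nat.even_add.mp ey
            simp [Nat.even_iff] at h; omega
          have key : (rcount x * rcount y) % 2 = ((a : ℕ) * (b : ℕ)) % 2 := by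
            rw [Nat.mul_mod, h1, h2, ← Nat.mul_mod]
          rw [neg_one_pow_eq_pow_mod_two, key, ← neg_one_pow_eq_pow_mod_two]
        · have : psi n b y = 0 := by
            simp [psi, hy, (Nat.not_even_iff_odd.mp ey).neg_one_pow]
          simp [this]
      · have : psi n a x = 0 := by
          simp [psi, hx, (Nat.not_even_iff_odd.mp ex).neg_one_pow]
        simp [this]
    · simp [psi, hy]
  · simp [psi, hx]
end

section
/- Let n ≥ 1. With Z_{(i,j)} and X_{(i,j)} the single-site phase and bit-flip operators on ℂ^config, the following hold for all a ∈ {0,1}: (1) for every row i, the product over all columns j of X_{(i,j)} (flipping every bit in row i) maps ψ_a to ψ_{1−a}; and (2) for every column j, the product over all rows i of Z_{(i,j)} satisfies (∏_i Z_{(i,j)}) ψ_a = (−1)^a ψ_a. That is, X applied to all qubits of any one row acts as the logical X, and Z applied to all qubits of any one column acts as the logical Z, on the Bacon-Shor codewords. -/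
/-- The sign `(−1)^b` of a bit. -/
def bsign (b : Bool) : ℂ := if b then -1 else 1

/-- Logical operators of the Bacon-Shor code: (1) flipping every bit of any one row
maps `ψ_a` to `ψ_{1−a}` (logical `X`), and (2) the product of `Z` over any one column
multiplies `ψ_a` by `(−1)^a` (logical `Z`). -/
theorem logical_operators_act (n : ℕ) (hn : 1 ≤ n) (a : Fin 2) :
    (∀ (i : Fin n) (x : Config n),
        psi n a (fun p => if p.1 = i then !(x p) else x p) = psi n (1 - a) x) ∧
      (∀ (j : Fin n) (x : Config n),
        (∏ i : Fin n, bsign (x (i, j))) * psi n a x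
          = (-1 : ℂ) ^ (a : ℕ) * psi n a x) := by
  have j0 : Fin n := ⟨0, hn⟩
  constructor
  · intro i x
    set x' : Config n := fun p => if p.1 = i then !(x p) else x p with hx'
    have hrc : RowConst x' ↔ RowConst x := by
      constructor <;> intro h k j j' <;> by_cases hk : k = i
      · subst hk
        have hh := h k j j'
        simp only [hx'] at hh
        simpa using hh
      · have hh := h k j j'
        simpa [hx', hk] using hh
      · subst hk
        simp [hx', h k j j']
      · simp [hx', hk, h k j j']
    by_cases hx : RowConst x
    · have hx'' : RowConst x' := hrc.mpr hx
      have key : ∀ (y : Config n), rcount y =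
          ((Finset.univ.erase i).filter (fun k => ∀ j, y (k, j) = true)).card +
            (if (∀ j, y (i, j) = true) then 1 else 0) := by
        intro y
        unfold rcount
        have huniv : (Finset.univ : Finset (Fin n)) =
            insert i (Finset.univ.erase i) :=
          (Finset.insert_erase (Finset.mem_univ i)).symm
        conv_lhs => rw [huniv]
        rw [Finset.filter_insert]
        split_ifs with h
        · rw [Finset.card_insert_of_notMem (by simp)]
        · simp
      have hQ : ((Finset.univ.erase i).filter (fun k => ∀ j, x' (k, j) = true)).card =
          ((Finset.univ.erase i).filter (fun k => ∀ j, x (k, j) = true)).card := by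
        congr 1
        apply Finset.filter_congr
        intro k hk
        have hki : k ≠ i := Finset.ne_of_mem_erase hk
        simp [hx', hki]
      have hiff : (∀ j, x' (i, j) = true) ↔ ¬ (∀ j, x (i, j) = true) := by
        constructor
        · intro h hcon
          have h1 := h j0
          have h2 := hcon j0
          simp [hx', h2] at h1
        · intro h j
          by_cases hb : x (i, j) = true
          · exact absurd (fun j' => (hx i j' j).trans hb) h
          · simp at hb; simp [hx', hb]
      have hsign : (-1 : ℂ) ^ (rcount x') = -(-1 : ℂ) ^ (rcount x) := by
        rw [key x', key x, hQ]
        by_cases hPi : ∀ j, x (i, j) = true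
        · rw [if_pos hPi, if_neg (by simpa [hiff] using hPi)]
          simp [pow_succ]
        · rw [if_neg hPi, if_pos (hiff.mpr hPi)]
          simp [pow_succ]
      unfold psi
      rw [if_pos hx'', if_pos hx]
      congr 1
      congr 1
      rw [pow_add, pow_add, hsign]
      fin_cases a <;> norm_num
    · have hx'' : ¬ RowConst x' := fun h => hx (hrc.mp h)
      unfold psi
      rw [if_neg hx'', if_neg hx]
  · intro j x
    by_cases hx : RowConst x
    · have hb : ∀ i : Fin n, bsign (x (i, j)) =
          if (∀ j', x (i, j') = true) then (-1 : ℂ) else 1 := by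
        intro i
        unfold bsign
        by_cases h : x (i, j) = true
        · rw [if_pos h, if_pos (fun j' => (hx i j' j).trans h)]
        · simp at h
          rw [if_neg (by simp [h]), if_neg (fun hc => by simp [hc j] at h)]
      have hprod : (∏ i : Fin n, bsign (x (i, j))) = (-1 : ℂ) ^ (rcount x) := by
        rw [Finset.prod_congr rfl (fun i _ => hb i), Finset.prod_ite,
          Finset.prod_const, Finset.prod_const_one, mul_one, rcount]
      rw [hprod]
      unfold psi
      rw [if_pos hx]
      have hu : ((-1 : ℂ) ^ (a : ℕ)) ^ 2 = 1 := by
        rw [← pow_mul, mul_comm, pow_mul]; norm_num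
      have hv : ((-1 : ℂ) ^ (rcount x)) ^ 2 = 1 := by
        rw [← pow_mul, mul_comm, pow_mul]; norm_num
      rw [pow_add]
      set u := (-1 : ℂ) ^ (a : ℕ)
      set v := (-1 : ℂ) ^ (rcount x)
      set c := ((Real.sqrt 2 : ℂ))⁻¹ ^ (n + 1)
      linear_combination c * u * hv - c * v * hu
    · unfold psi
      rw [if_neg hx]
      ring
end

section
/- Let n ≥ 1 and let S, T be subsets of the n×n lattice with |S| ≤ n − 1 and |T| ≤ n − 1. Then for all a, b ∈ {0,1}: ⟨ψ_a, E_S† E_T ψ_b⟩ = 2^{−ρ(S)} if S = T and a = b, and ⟨ψ_a, E_S† E_T ψ_b⟩ = 0 otherwise, where ρ(S) is the number of rows containing at least one site of S. In particular, the Knill–Laflamme orthogonality conditions hold exactly for all damping-error patterns of weight at most n − 1 on the n×n Bacon-Shor code. -/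
/-- The damping-pattern operator `E_S` applies the damping operator `E = |0⟩⟨1|` at
every site of `S` and the identity elsewhere, acting on states `ψ : Config n → ℂ`:
`(E_S ψ)(x) = ψ(x with all sites of S set to 1)` if `x` vanishes on `S`, else `0`. -/
noncomputable def dampOp {n : ℕ} (S : Finset (Fin n × Fin n))
    (ψ : Config n → ℂ) : Config n → ℂ :=
  fun x =>
    if ∀ s ∈ S, x s = false then ψ (fun p => if p ∈ S then true else x p) else 0

/-- The number of rows containing at least one site of `S`. -/
def rowsTouched {n : ℕ} (S : Finset (Fin n × Fin n)) : ℕ :=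
  (Finset.univ.filter fun i : Fin n => ∃ j : Fin n, (i, j) ∈ S).card

section BSaux

variable {n : ℕ}

lemma bs_no_full_row {S : Finset (Fin n × Fin n)} (hn : 1 ≤ n) (hS : S.card ≤ n - 1)
    (i : Fin n) : ∃ j : Fin n, (i, j) ∉ S := by
  by_contra h
  push_neg at h
  have hsub : (Finset.univ.image fun j : Fin n => (i, j)) ⊆ S := by
    intro p hp
    simp only [Finset.mem_image, Finset.mem_univ, true_and] at hp
    obtain ⟨j, rfl⟩ := hp
    exact h j
  have hcard := Finset.card_le_card hsub
  rw [Finset.card_image_of_injective _ (fun a b hab => by simpa using hab),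
    Finset.card_univ, Fintype.card_fin] at hcard
  omega

lemma bs_star_term (k m : ℕ) :
    star (((Real.sqrt 2 : ℂ))⁻¹ ^ k * (1 + (-1 : ℂ) ^ m))
      = ((Real.sqrt 2 : ℂ))⁻¹ ^ k * (1 + (-1 : ℂ) ^ m) := by
  simp [Complex.star_def, map_mul, map_add, map_pow, map_inv₀, Complex.conj_ofReal]

lemma bs_neg_one_sq (m : ℕ) : (-1 : ℂ) ^ m * (-1 : ℂ) ^ m = 1 := by
  rw [← pow_add, ← two_mul, pow_mul]; norm_num

lemma bs_term_sq (k m : ℕ) :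
    (((Real.sqrt 2 : ℂ))⁻¹ ^ k * (1 + (-1 : ℂ) ^ m)) *
      (((Real.sqrt 2 : ℂ))⁻¹ ^ k * (1 + (-1 : ℂ) ^ m))
      = ((2 : ℂ))⁻¹ ^ k * (2 * (1 + (-1 : ℂ) ^ m)) := by
  have hc : ((Real.sqrt 2 : ℂ))⁻¹ * ((Real.sqrt 2 : ℂ))⁻¹ = (2 : ℂ)⁻¹ := by
    rw [← mul_inv, ← Complex.ofReal_mul, Real.mul_self_sqrt (by norm_num)]
    norm_num
  rw [mul_mul_mul_comm, ← mul_pow, hc]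
  congr 1
  linear_combination bs_neg_one_sq m

lemma bs_parity_zero (a b : Fin 2) (hab : a ≠ b) (r : ℕ) :
    (1 + (-1:ℂ)^((a:ℕ)+r)) * (1 + (-1:ℂ)^((b:ℕ)+r)) = 0 := by
  have hv : (a:ℕ) ≠ (b:ℕ) := Fin.val_ne_of_ne hab
  have ha := a.isLt
  have hb := b.isLt
  have h1 : (-1:ℂ)^((a:ℕ)+r) * (-1:ℂ)^((b:ℕ)+r) = -1 := by
    rw [← pow_add]
    have he : (a:ℕ)+r+((b:ℕ)+r) = 1 + 2*r := by omega
    rw [he, pow_add, pow_mul]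
    norm_num
  have h2 := bs_neg_one_sq ((b:ℕ)+r)
  linear_combination (1 + (-1:ℂ)^((b:ℕ)+r)) * h1 - (-1:ℂ)^((a:ℕ)+r) * h2

end BSaux

/-- Exact Knill–Laflamme conditions for damping errors of weight at most `n − 1` on
the `n × n` Bacon-Shor code: `⟨ψ_a, E_S† E_T ψ_b⟩ = 2^{−ρ(S)}` if `S = T` and `a = b`,
and `0` otherwise, where `ρ(S)` is the number of rows touched by `S`. -/
theorem knill_laflamme_damping (n : ℕ) (hn : 1 ≤ n)
    (S T : Finset (Fin n × Fin n)) (hS : S.card ≤ n - 1) (hT : T.card ≤ n - 1)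
    (a b : Fin 2) :
    (∑ x : Config n, star (dampOp S (psi n a) x) * dampOp T (psi n b) x)
      = if S = T ∧ a = b then ((2 : ℂ))⁻¹ ^ rowsTouched S else 0 := by
  by_cases hST : S = T
  · subst hST
    by_cases hab : a = b
    · subst hab
      rw [if_pos ⟨rfl, rfl⟩]
      classical
      set R : Finset (Fin n) := Finset.univ.filter (fun i => ∃ j : Fin n, (i, j) ∈ S) with hR
      have hrho : rowsTouched S = R.card := rfl
      have hRS : R.card ≤ S.card := by
        have hsub : R ⊆ S.image Prod.fst := by
          intro i hi
          rw [hR, Finset.mem_filter] at hi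
          obtain ⟨-, j, hj⟩ := hi
          exact Finset.mem_image.2 ⟨(i, j), hj, rfl⟩
        exact le_trans (Finset.card_le_card hsub) Finset.card_image_le
      have hRlt : R.card < n := by omega
      set j0 : Fin n := ⟨0, hn⟩ with hj0
      set Y : Finset (Fin n) → Config n :=
        (fun K p => if p ∈ S then false else decide (p.1 ∈ R ∪ K)) with hY
      have hmono : ∀ K K' : Finset (Fin n), K ⊆ Rᶜ → Y K = Y K' → K ⊆ K' := by
        intro K K' hK hE i hiK
        have hiR : i ∉ R := by simpa using hK hiK
        have hiS : (i, j0) ∉ S := fun hj =>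
          hiR (Finset.mem_filter.2 ⟨Finset.mem_univ _, j0, hj⟩)
        have h1 : Y K (i, j0) = true := by
          simp only [hY, if_neg hiS, decide_eq_true_iff, Finset.mem_union]
          exact Or.inr hiK
        rw [hE] at h1
        simp only [hY, if_neg hiS, decide_eq_true_iff, Finset.mem_union] at h1
        exact h1.resolve_left hiR
      have hvan : ∀ x ∈ (Finset.univ : Finset (Config n)),
          x ∉ (Rᶜ.powerset).image Y →
          star (dampOp S (psi n a) x) * dampOp S (psi n a) x = 0 := by
        intro x _ hx
        simp only [dampOp]
        split_ifs with h1
        · simp only [psi]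
          split_ifs with h2
          · exfalso
            apply hx
            refine Finset.mem_image.2 ⟨Rᶜ.filter (fun i => x (i, j0) = true),
              Finset.mem_powerset.2 (Finset.filter_subset _ _), ?_⟩
            funext p
            obtain ⟨i, j⟩ := p
            simp only [hY]
            by_cases hpS : (i, j) ∈ S
            · rw [if_pos hpS, h1 _ hpS]
            · rw [if_neg hpS]
              by_cases hiR : i ∈ R
              · obtain ⟨js, hjs⟩ := (Finset.mem_filter.1 hiR).2
                have hxt := h2 i js j
                beta_reduce at hxt
                rw [if_pos hjs, if_neg hpS] at hxt
                rw [← hxt]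
                simp [Finset.mem_union, hiR]
              · have hj0S : (i, j0) ∉ S := fun hj =>
                  hiR (Finset.mem_filter.2 ⟨Finset.mem_univ _, j0, hj⟩)
                have hx0 := h2 i j j0
                beta_reduce at hx0
                rw [if_neg hpS, if_neg hj0S] at hx0
                rw [hx0]
                by_cases hxt : x (i, j0) = true
                · simp [Finset.mem_union, Finset.mem_filter, Finset.mem_compl, hiR, hxt]
                · simp only [Bool.not_eq_true] at hxt
                  simp [Finset.mem_union, Finset.mem_filter, Finset.mem_compl, hiR, hxt]
          · simp
        · simp
      have hterm : ∀ K ∈ Rᶜ.powerset,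
          star (dampOp S (psi n a) (Y K)) * dampOp S (psi n a) (Y K)
            = ((2:ℂ))⁻¹ ^ (n+1) * (2 * (1 + (-1:ℂ) ^ ((a:ℕ) + (R.card + K.card)))) := by
        intro K hK
        have hKR : K ⊆ Rᶜ := Finset.mem_powerset.1 hK
        have hy : (fun p => if p ∈ S then true else Y K p)
            = fun p : Fin n × Fin n => decide (p.1 ∈ R ∪ K) := by
          funext p
          by_cases hpS : p ∈ S
          · rw [if_pos hpS]
            have hp1 : p.1 ∈ R := Finset.mem_filter.2
              ⟨Finset.mem_univ _, p.2, by rwa [Prod.mk.eta]⟩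
            simp [Finset.mem_union, hp1]
          · simp only [hY, if_neg hpS]
        simp only [dampOp]
        rw [if_pos (fun s hs => by simp only [hY, if_pos hs])]
        rw [hy]
        have hrc : RowConst (fun p : Fin n × Fin n => decide (p.1 ∈ R ∪ K)) :=
          fun i j j' => rfl
        simp only [psi, if_pos hrc]
        have hcount : rcount (fun p : Fin n × Fin n => decide (p.1 ∈ R ∪ K))
            = R.card + K.card := by
          have hdis : Disjoint R K := Finset.disjoint_left.2
            fun i hiR hiK => Finset.mem_compl.1 (hKR hiK) hiR
          unfold rcount
          rw [show (Finset.univ.filter fun i : Fin n =>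
              ∀ j : Fin n, (fun p : Fin n × Fin n => decide (p.1 ∈ R ∪ K)) (i, j) = true)
              = R ∪ K from ?_, Finset.card_union_of_disjoint hdis]
          ext i
          simp only [Finset.mem_filter, Finset.mem_univ, true_and, decide_eq_true_iff]
          exact ⟨fun h => h j0, fun h _ => h⟩
        rw [hcount, bs_star_term, bs_term_sq]
      rw [← Finset.sum_subset (Finset.subset_univ ((Rᶜ.powerset).image Y)) hvan,
          Finset.sum_image (fun K hK K' hK' h =>
            le_antisymm (hmono K K' (Finset.mem_powerset.1 hK) h)
              (hmono K' K (Finset.mem_powerset.1 hK') h.symm)),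
          Finset.sum_congr rfl hterm, ← Finset.mul_sum]
      have hsum : ∑ K ∈ Rᶜ.powerset, (2 * (1 + (-1:ℂ) ^ ((a:ℕ) + (R.card + K.card))))
          = 2 * 2 ^ (n - R.card) := by
        have hcongr : ∀ K ∈ Rᶜ.powerset,
            2 * (1 + (-1:ℂ) ^ ((a:ℕ) + (R.card + K.card)))
            = 2 + (2 * (-1:ℂ)^((a:ℕ)+R.card)) * (-1:ℂ)^K.card := by
          intro K _
          rw [show (a:ℕ) + (R.card + K.card) = ((a:ℕ) + R.card) + K.card from by omega,
            pow_add]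
          ring
        rw [Finset.sum_congr rfl hcongr, Finset.sum_add_distrib, Finset.sum_const,
          ← Finset.mul_sum]
        have hz : ∑ K ∈ Rᶜ.powerset, ((-1:ℂ)) ^ K.card = 0 := by
          have hInt := Finset.sum_powerset_neg_one_pow_card (x := (Rᶜ : Finset (Fin n)))
          have hne : (Rᶜ : Finset (Fin n)) ≠ ∅ := by
            intro hemp
            have hc0 : (Rᶜ : Finset (Fin n)).card = 0 := by rw [hemp]; rfl
            rw [Finset.card_compl, Fintype.card_fin] at hc0
            omega
          rw [if_neg hne] at hInt
          have hcast : ((∑ K ∈ Rᶜ.powerset, ((-1:ℤ)) ^ K.card : ℤ) : ℂ)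
              = ∑ K ∈ Rᶜ.powerset, ((-1:ℂ)) ^ K.card := by push_cast; rfl
          rw [← hcast, hInt]
          norm_num
        rw [hz, mul_zero, add_zero, Finset.card_powerset, Finset.card_compl,
          Fintype.card_fin, nsmul_eq_mul]
        push_cast
        ring
      rw [hsum, hrho]
      have hnc : n - R.card + R.card = n := Nat.sub_add_cancel (le_of_lt hRlt)
      have hkey : (2:ℂ) * 2 ^ (n - R.card) * 2 ^ R.card = 2 ^ (n+1) := by
        rw [mul_assoc, ← pow_add, hnc, pow_succ]
        ring
      rw [inv_pow, inv_pow, ← hkey]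
      field_simp
    · rw [if_neg (by tauto)]
      apply Finset.sum_eq_zero
      intro x _
      simp only [dampOp]
      split_ifs with h1
      · simp only [psi]
        split_ifs with h2
        · rw [bs_star_term]
          rw [mul_mul_mul_comm]
          rw [show (1 + (-1:ℂ)^((a:ℕ) + rcount (fun p => if p ∈ S then true else x p))) *
              (1 + (-1:ℂ)^((b:ℕ) + rcount (fun p => if p ∈ S then true else x p))) = 0 from
            bs_parity_zero a b hab _]
          ring
        · simp
      · simp
  · rw [if_neg (by tauto)]
    apply Finset.sum_eq_zero
    intro x _
    simp only [dampOp]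
    split_ifs with h1 h2
    · -- h1 : vanishes on S, h2 : vanishes on T
      simp only [psi]
      split_ifs with h3 h4 h4
      · -- both row-constant: contradiction with S ≠ T
        exfalso
        apply hST
        have key : ∀ (U V : Finset (Fin n × Fin n)), U.card ≤ n - 1 →
            (∀ s ∈ U, x s = false) → (∀ s ∈ V, x s = false) →
            RowConst (fun p => if p ∈ U then true else x p) →
            RowConst (fun p => if p ∈ V then true else x p) →
            U ⊆ V := by
          intro U V hU hxU hxV hrU hrV p hp
          obtain ⟨i, j⟩ := p
          obtain ⟨j0, hj0⟩ := bs_no_full_row hn hU i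
          have hy0 : (if (i, j0) ∈ U then true else x (i, j0)) =
              (if (i, j) ∈ U then true else x (i, j)) := hrU i j0 j
          rw [if_neg hj0, if_pos hp] at hy0
          -- hy0 : x (i, j0) = true
          have hz : (if (i, j) ∈ V then true else x (i, j)) =
              (if (i, j0) ∈ V then true else x (i, j0)) := hrV i j j0
          by_contra hpV
          rw [if_neg hpV, hxU _ hp] at hz
          by_cases hj0V : (i, j0) ∈ V
          · rw [if_pos hj0V] at hz; exact Bool.false_ne_true hz
          · rw [if_neg hj0V, hy0] at hz; exact Bool.false_ne_true hz
        exact le_antisymm (key S T hS h1 h2 h3 h4) (key T S hT h2 h1 h4 h3)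
      · simp
      · simp
      · simp
    · simp
    · simp
    · simp
end
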